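/- Let A_t be an attractor of the asynchronous transition system TS of a Boolean network BN, and let C = (𝕆,𝟙) be a control. Then C is a permanent target control for A_t (i.e., A_t ⊆ S|_C and for every state s ∈ S, every fair infinite path of TS|_C starting from C(s) eventually reaches a state of A_t) if and only if A_t is an attractor of TS|_C and C(S) ⊆ bas^S_{TS|_C}(A_t), the strong basin of A_t in TS|_C. -/

import Mathlib

/-- A state of a Boolean network with `n` variables. -/
abbrev BNState (n : ℕ) := Fin n → Bool

/-- One asynchronous transition of the Boolean network with functions `F`:
either exactly one variable `i` changes and takes the value `F i s = !(s i)`,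
or the state stays the same and some variable `i` satisfies `F i s = s i`. -/
def Step {n : ℕ} (F : Fin n → BNState n → Bool) (s s' : BNState n) : Prop :=
  (∃ i, s' i = F i s ∧ s' i = !(s i) ∧ ∀ j, j ≠ i → s' j = s j) ∨
  (s' = s ∧ ∃ i, F i s = s i)

/-- The set of states reachable from `s` by a (possibly empty) sequence of transitions. -/
def reach {n : ℕ} (F : Fin n → BNState n → Bool) (s : BNState n) : Set (BNState n) :=
  {s' | Relation.ReflTransGen (Step F) s s'}

/-- An attractor: a minimal non-empty set `A` of states with `reach F s = A` for every `s ∈ A`. -/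
def IsAttractor {n : ℕ} (F : Fin n → BNState n → Bool) (A : Set (BNState n)) : Prop :=
  A.Nonempty ∧ (∀ s ∈ A, reach F s = A) ∧
  ∀ B, B ⊆ A → B.Nonempty → (∀ s ∈ B, reach F s = B) → B = A

/-- An infinite path of the transition system. -/
def IsPath {n : ℕ} (F : Fin n → BNState n → Bool) (π : ℕ → BNState n) : Prop :=
  ∀ k, Step F (π k) (π (k + 1))

/-- A state occurs infinitely often in the sequence `π`. -/
def InfOften {n : ℕ} (π : ℕ → BNState n) (x : BNState n) : Prop :=
  ∀ N, ∃ k, N ≤ k ∧ π k = x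

/-- Fairness: every possible next state of every state occurring infinitely often
also occurs infinitely often. -/
def Fair {n : ℕ} (F : Fin n → BNState n → Bool) (π : ℕ → BNState n) : Prop :=
  ∀ x, InfOften π x → ∀ y, Step F x y → InfOften π y

/-- The weak basin of `A`: states from which `A` is reachable. -/
def weakBasin {n : ℕ} (F : Fin n → BNState n → Bool) (A : Set (BNState n)) :
    Set (BNState n) :=
  {s | (reach F s ∩ A).Nonempty}

/-- The strong basin of an attractor `A`: states from which `A` is reachable and
no other attractor is reachable. -/
def strongBasin {n : ℕ} (F : Fin n → BNState n → Bool) (A : Set (BNState n)) :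
    Set (BNState n) :=
  {s | (reach F s ∩ A).Nonempty ∧
       ∀ A', IsAttractor F A' → A' ≠ A → reach F s ∩ A' = ∅}

/-- The application of the control `C = (O, I)` to a state. -/
def applyControl {n : ℕ} (O I : Finset (Fin n)) (s : BNState n) : BNState n :=
  fun i => if i ∈ O then false else if i ∈ I then true else s i

/-- The Boolean functions of the network under control `C = (O, I)`. -/
def ctrlF {n : ℕ} (O I : Finset (Fin n)) (F : Fin n → BNState n → Bool) :
    Fin n → BNState n → Bool :=
  fun i s => if i ∈ O then false else if i ∈ I then true else F i s

/-- The state space `S|_C` of the network under control `C = (O, I)`. -/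
def ctrlSpace {n : ℕ} (O I : Finset (Fin n)) : Set (BNState n) :=
  {s | (∀ i ∈ O, s i = false) ∧ (∀ i ∈ I, s i = true)}

/-- `S'` is a schema with off-set `O`, on-set `I` and don't-care-set `D`. -/
def IsSchema {n : ℕ} (S' : Set (BNState n)) (O I D : Finset (Fin n)) : Prop :=
  Disjoint O I ∧ Disjoint O D ∧ Disjoint I D ∧ O ∪ I ∪ D = Finset.univ ∧
  S' = {s : BNState n | (∀ i ∈ O, s i = false) ∧ (∀ i ∈ I, s i = true)}

/-- The strong basin, in the transition system with functions `F` and state space `SC`,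
of a target set of states `W`: the states of `SC` from which `W` is reachable and
no attractor disjoint from `W` is reachable. -/
def strongBasinSet {n : ℕ} (F : Fin n → BNState n → Bool) (SC W : Set (BNState n)) :
    Set (BNState n) :=
  {s | s ∈ SC ∧ (reach F s ∩ W).Nonempty ∧
       ∀ A', IsAttractor F A' → A' ∩ W = ∅ → reach F s ∩ A' = ∅}


/-! A fair path of a finite transition system eventually moves inside the set of states it
visits infinitely often, and fairness makes that set an attractor reachable from the start.
Conversely, fair paths exist from every state: walk into a bottom strongly connected
component and tour all of it forever. Hence every fair path from `s` visits `A` exactly when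
`s` lies in the strong basin of `A`, provided the family of starting points considered is closed
under reachability; `C(S) = S|_C` is such a family for `TS|_C`. Finally, within `S|_C` the
transitions of `TS|_C` are those of `TS` up to self-loops, so an attractor of `TS` lying in
`S|_C` is one of `TS|_C`, and every attractor of `TS|_C` lies in `S|_C` since a controlled
variable can only move towards its forced value and never back. -/

open Filter

namespace Relation

variable {α : Type*} {r : α → α → Prop}

theorem reflTransGen_of_forall_succ {π : ℕ → α} (hπ : ∀ k, r (π k) (π (k + 1))) {k m : ℕ}
    (h : k ≤ m) : ReflTransGen r (π k) (π m) := by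
  induction m, h using Nat.le_induction with
  | base => exact .refl
  | succ m _ ih => exact ih.tail (hπ m)

theorem TransGen.exists_path {x y : α} (h : TransGen r x y) :
    ∃ m > 0, ∃ p : ℕ → α, p 0 = x ∧ p m = y ∧ ∀ i < m, r (p i) (p (i + 1)) := by
  induction h with
  | single hxy => exact ⟨1, one_pos, fun i => if i = 0 then x else _, rfl, rfl, by simpa⟩
  | @tail y z _ hyz ih =>
    obtain ⟨m, hm, p, hp0, hpm, hp⟩ := ih
    refine ⟨m + 1, m.succ_pos, fun i => if i ≤ m then p i else z, by simp [hp0], by simp, ?_⟩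
    intro i hi
    rcases Nat.lt_succ_iff_lt_or_eq.1 hi with hi | rfl
    · simpa [hi.le, Nat.succ_le_of_lt hi] using hp i hi
    · simpa [hpm] using hyz

theorem exists_path_through {w : ℕ → α} (hw : ∀ k, TransGen r (w k) (w (k + 1))) :
    ∃ π : ℕ → α, π 0 = w 0 ∧ (∀ t, r (π t) (π (t + 1))) ∧ ∀ k, ∃ t ≥ k, π t = w k := by
  choose m hm p hp0 hpm hp using fun k => (hw k).exists_path
  -- `(k, i)` is the position `i` on the `k`-th segment
  let next : ℕ × ℕ → ℕ × ℕ := fun q => if q.2 + 1 < m q.1 then (q.1, q.2 + 1) else (q.1 + 1, 0)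
  let pos : ℕ → ℕ × ℕ := fun t => next^[t] (0, 0)
  have pos_succ (t : ℕ) : pos (t + 1) = next (pos t) := Function.iterate_succ_apply' _ _ _
  have pos_lt (t : ℕ) : (pos t).2 < m (pos t).1 := by
    induction t with
    | zero => exact hm 0
    | succ t _ =>
      rw [pos_succ]
      dsimp only [next]
      split_ifs with h
      exacts [h, hm _]
  refine ⟨fun t => p (pos t).1 (pos t).2, hp0 0, fun t => ?_, fun k => ?_⟩
  · dsimp only
    rw [pos_succ]
    dsimp only [next]
    split_ifs with h
    · exact hp _ _ (pos_lt t)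
    · have hlast : (pos t).2 + 1 = m (pos t).1 := by have := pos_lt t; omega
      rw [hp0, ← hpm, ← hlast]
      exact hp _ _ (pos_lt t)
  · suffices ∃ t ≥ k, pos t = (k, 0) by
      obtain ⟨t, hkt, ht⟩ := this
      exact ⟨t, hkt, by simp only [ht, hp0]⟩
    induction k with
    | zero => exact ⟨0, le_rfl, rfl⟩
    | succ k ih =>
      obtain ⟨t, hkt, ht⟩ := ih
      have along : ∀ j < m k, pos (t + j) = (k, j) := by
        intro j hj
        induction j with
        | zero => exact ht
        | succ j ihj =>
          rw [← add_assoc, pos_succ, ihj (by omega)]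
          simp [next, hj]
      refine ⟨t + (m k - 1) + 1, by have := hm k; omega, ?_⟩
      rw [pos_succ, along _ (by have := hm k; omega)]
      simp [next, Nat.sub_add_cancel (hm k)]

theorem exists_reflTransGen_recurrent [Finite α] (s : α) :
    ∃ a, ReflTransGen r s a ∧ ∀ b, ReflTransGen r a b → ReflTransGen r b a := by
  obtain ⟨a, hsa, hmin⟩ := Set.Finite.exists_minimalFor (fun a => {b | ReflTransGen r a b})
    {a | ReflTransGen r s a} (Set.toFinite _) ⟨s, .refl⟩
  refine ⟨a, hsa, fun b hab => ?_⟩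
  exact hmin (hsa.trans hab) (fun c hbc => hab.trans hbc) ReflTransGen.refl

theorem exists_fair_path [Finite α] (htot : ∀ a, ∃ b, r a b) (s : α) :
    ∃ π : ℕ → α, π 0 = s ∧ (∀ k, r (π k) (π (k + 1))) ∧
      ∀ x, (∃ᶠ k in atTop, π k = x) → ∀ y, r x y → ∃ᶠ k in atTop, π k = y := by
  obtain ⟨b, hsb⟩ := htot s
  obtain ⟨a, hba, ha⟩ := exists_reflTransGen_recurrent (r := r) b
  -- the states reachable from the recurrent state `a` form a strongly connected closed set
  let A : Set α := {x | ReflTransGen r a x}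
  have hA_conn (x y : α) (hx : x ∈ A) (hy : y ∈ A) : ReflTransGen r x y := (ha x hx).trans hy
  have : Nonempty A := ⟨⟨a, .refl⟩⟩
  obtain ⟨g, hg⟩ := exists_surjective_nat A
  -- `w` visits `s`, then every state of `A` infinitely often
  let w : ℕ → α := fun k => Nat.casesOn k s fun j => (g j.unpair.1 : α)
  have hw (k : ℕ) : TransGen r (w k) (w (k + 1)) := by
    cases k with
    | zero => exact .head' hsb (hba.trans (g _).2)
    | succ k =>
      obtain ⟨c, hc⟩ := htot (g k.unpair.1)
      exact .head' hc (hA_conn c _ ((g _).2.tail hc) (g _).2)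
  obtain ⟨π, hπ0, hπ, hvisit⟩ := exists_path_through hw
  refine ⟨π, hπ0, hπ, fun x hx y hxy => frequently_atTop.2 fun N => ?_⟩
  obtain ⟨T, -, hT⟩ := hvisit 1
  obtain ⟨t, hTt, rfl⟩ := frequently_atTop.1 hx T
  have hy : y ∈ A := ((hT ▸ (g _).2 : π T ∈ A).trans (reflTransGen_of_forall_succ hπ hTt)).tail hxy
  obtain ⟨i, hi⟩ := hg ⟨y, hy⟩
  obtain ⟨t', ht', hπt'⟩ := hvisit (i.pair N + 1)
  refine ⟨t', by have := Nat.right_le_pair i N; omega, ?_⟩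
  simp [hπt', w, hi]

end Relation

section BooleanNetwork

variable {n : ℕ} {F : Fin n → BNState n → Bool}

theorem exists_step (hn : 1 ≤ n) (F : Fin n → BNState n → Bool) (s : BNState n) :
    ∃ t, Step F s t := by
  let i : Fin n := ⟨0, hn⟩
  by_cases h : F i s = s i
  · exact ⟨s, .inr ⟨rfl, i, h⟩⟩
  · exact ⟨Function.update s i (F i s),
      .inl ⟨i, by simp, by simpa using Bool.eq_not_iff.2 h, fun j hj => by simp [hj]⟩⟩

theorem Step.apply_eq_or {s s' : BNState n} (h : Step F s s') (i : Fin n) :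
    s' i = s i ∨ s' i = F i s := by
  rcases h with ⟨j, hj, -, hother⟩ | ⟨rfl, -⟩
  · by_cases hij : i = j
    · exact .inr (hij ▸ hj)
    · exact .inl (hother i hij)
  · exact .inl rfl

theorem apply_eq_of_mem_reach {i : Fin n} {b : Bool} (hi : ∀ t, F i t = b) {s t : BNState n}
    (hs : s i = b) (ht : t ∈ reach F s) : t i = b := by
  induction ht with
  | refl => exact hs
  | tail _ hstep ih => rcases hstep.apply_eq_or i with h | h <;> simp [h, ih, hi]

theorem IsAttractor.mem_of_mem_reach {A : Set (BNState n)} (hA : IsAttractor F A)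
    {s t : BNState n} (hs : s ∈ A) (ht : t ∈ reach F s) : t ∈ A :=
  hA.2.1 s hs ▸ ht

theorem IsAttractor.eq_of_mem {A B : Set (BNState n)} (hA : IsAttractor F A)
    (hB : IsAttractor F B) {x : BNState n} (hxA : x ∈ A) (hxB : x ∈ B) : A = B := by
  rw [← hA.2.1 x hxA, hB.2.1 x hxB]

theorem isAttractor_of_forall_reach_eq {A : Set (BNState n)} (hne : A.Nonempty)
    (hA : ∀ s ∈ A, reach F s = A) : IsAttractor F A :=
  ⟨hne, hA, fun _ hBA ⟨s, hsB⟩ hB => by rw [← hB s hsB, hA s (hBA hsB)]⟩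

theorem IsAttractor.apply_eq_of_forall_eq {A : Set (BNState n)} (hA : IsAttractor F A)
    {i : Fin n} {b : Bool} (hi : ∀ t, F i t = b) {s : BNState n} (hs : s ∈ A) : s i = b := by
  by_contra hsi
  let s' := Function.update s i b
  have hstep : Step F s s' :=
    .inl ⟨i, by simp [s', hi], by cases b <;> simp_all [s'], fun j hj => by simp [s', hj]⟩
  -- `s` is reachable back from `s' ∈ A`, yet every state reachable from `s'` has `b` at `i`
  have hback : s ∈ reach F s' := hA.2.1 s' (hA.mem_of_mem_reach hs (.single hstep)) ▸ hs
  exact hsi (apply_eq_of_mem_reach hi (by simp [s']) hback)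

theorem isAttractor_setOf_infOften {π : ℕ → BNState n} (hπ : IsPath F π) (hfair : Fair F π) :
    IsAttractor F {x | InfOften π x} := by
  refine isAttractor_of_forall_reach_eq ?_ fun x hx => ?_
  · obtain ⟨x, hx⟩ := Finite.exists_infinite_fiber π
    exact ⟨x, frequently_atTop.1 (Nat.frequently_atTop_iff_infinite.2 (Set.infinite_coe_iff.1 hx))⟩
  · refine Set.Subset.antisymm (fun y hy => ?_) fun y hy => ?_
    · induction hy with
      | refl => exact hx
      | tail _ hstep ih => exact hfair _ ih _ hstep
    · obtain ⟨k, -, rfl⟩ := hx 0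
      obtain ⟨m, hkm, rfl⟩ := hy k
      exact Relation.reflTransGen_of_forall_succ hπ hkm

theorem exists_isPath_fair (hn : 1 ≤ n) (F : Fin n → BNState n → Bool) (s : BNState n) :
    ∃ π, π 0 = s ∧ IsPath F π ∧ Fair F π := by
  obtain ⟨π, hπ0, hπ, hfair⟩ := Relation.exists_fair_path (exists_step hn F) s
  refine ⟨π, hπ0, hπ, fun x hx y hxy => ?_⟩
  exact frequently_atTop.1 (hfair x (frequently_atTop.2 hx) y hxy)

theorem exists_mem_of_mem_strongBasin {A : Set (BNState n)} {π : ℕ → BNState n}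
    (hπ : IsPath F π) (hfair : Fair F π) (hA : π 0 ∈ strongBasin F A) : ∃ k, π k ∈ A := by
  have hL := isAttractor_setOf_infOften hπ hfair
  obtain ⟨x, hx⟩ := hL.1
  obtain ⟨k, -, hk⟩ := hx 0
  by_cases hLA : {x | InfOften π x} = A
  · exact ⟨k, hLA ▸ hk ▸ hx⟩
  · have hreach : x ∈ reach F (π 0) := hk ▸ Relation.reflTransGen_of_forall_succ hπ k.zero_le
    exact absurd (hA.2 _ hL hLA) (Set.nonempty_iff_ne_empty.1 ⟨x, hreach, hx⟩)

theorem mem_strongBasin_of_forall_fair (hn : 1 ≤ n) {A P : Set (BNState n)}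
    (hA : IsAttractor F A) (hP : ∀ s ∈ P, reach F s ⊆ P)
    (hfair : ∀ π, IsPath F π → Fair F π → π 0 ∈ P → ∃ k, π k ∈ A) {s : BNState n}
    (hs : s ∈ P) : s ∈ strongBasin F A := by
  have visits (t : BNState n) (ht : t ∈ P) : ∃ u ∈ reach F t, u ∈ A := by
    obtain ⟨π, rfl, hπ, hπfair⟩ := exists_isPath_fair hn F t
    obtain ⟨k, hk⟩ := hfair π hπ hπfair ht
    exact ⟨π k, Relation.reflTransGen_of_forall_succ hπ k.zero_le, hk⟩
  refine ⟨visits s hs, fun A' hA' hne => Set.eq_empty_iff_forall_notMem.2 ?_⟩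
  rintro t ⟨hst, htA'⟩
  obtain ⟨u, htu, huA⟩ := visits t (hP s hs hst)
  exact hne (hA'.eq_of_mem hA (hA'.mem_of_mem_reach htA' htu) huA)

end BooleanNetwork

section Control

variable {n : ℕ} {O I : Finset (Fin n)} {F : Fin n → BNState n → Bool}

theorem applyControl_of_mem_ctrlSpace {s : BNState n} (hs : s ∈ ctrlSpace O I) :
    applyControl O I s = s := by
  funext i
  simp only [applyControl]
  split_ifs with hO hI
  exacts [(hs.1 i hO).symm, (hs.2 i hI).symm, rfl]

theorem range_applyControl (hOI : Disjoint O I) :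
    Set.range (applyControl O I) = ctrlSpace O I := by
  refine Set.Subset.antisymm ?_ fun s hs => ⟨s, applyControl_of_mem_ctrlSpace hs⟩
  rintro _ ⟨s, rfl⟩
  refine ⟨fun i hi => by simp [applyControl, hi], fun i hi => ?_⟩
  simp [applyControl, hi, Finset.disjoint_right.1 hOI hi]

theorem ctrlF_of_mem_left (i : Fin n) (hi : i ∈ O) (s : BNState n) :
    ctrlF O I F i s = false := by
  simp [ctrlF, hi]

theorem ctrlF_of_mem_right (hOI : Disjoint O I) (i : Fin n) (hi : i ∈ I) (s : BNState n) :
    ctrlF O I F i s = true := by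
  simp [ctrlF, hi, Finset.disjoint_right.1 hOI hi]

theorem reach_ctrlF_subset_ctrlSpace (hOI : Disjoint O I) {s : BNState n}
    (hs : s ∈ ctrlSpace O I) : reach (ctrlF O I F) s ⊆ ctrlSpace O I :=
  fun _ ht => ⟨fun i hi => apply_eq_of_mem_reach (ctrlF_of_mem_left i hi) (hs.1 i hi) ht,
    fun i hi => apply_eq_of_mem_reach (ctrlF_of_mem_right hOI i hi) (hs.2 i hi) ht⟩

theorem IsAttractor.subset_ctrlSpace (hOI : Disjoint O I) {A : Set (BNState n)}
    (hA : IsAttractor (ctrlF O I F) A) : A ⊆ ctrlSpace O I :=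
  fun _ hs => ⟨fun i hi => hA.apply_eq_of_forall_eq (ctrlF_of_mem_left i hi) hs,
    fun i hi => hA.apply_eq_of_forall_eq (ctrlF_of_mem_right hOI i hi) hs⟩

theorem ctrlF_apply_of_mem_ctrlSpace (hOI : Disjoint O I) {s : BNState n}
    (hs : s ∈ ctrlSpace O I) (i : Fin n) :
    ctrlF O I F i s = if i ∈ O ∨ i ∈ I then s i else F i s := by
  by_cases hO : i ∈ O
  · simp [hO, hs.1 i hO, ctrlF_of_mem_left i hO]
  by_cases hI : i ∈ I
  · simp [hI, hs.2 i hI, ctrlF_of_mem_right hOI i hI]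
  simp [ctrlF, hO, hI]

theorem Step.eq_or_step_of_ctrlF (hOI : Disjoint O I) {s s' : BNState n}
    (hs : s ∈ ctrlSpace O I) (h : Step (ctrlF O I F) s s') : s' = s ∨ Step F s s' := by
  rcases h with ⟨i, hi, hflip, hother⟩ | ⟨rfl, -⟩
  · rw [ctrlF_apply_of_mem_ctrlSpace hOI hs] at hi
    split_ifs at hi
    · simp [hi] at hflip
    · exact .inr (.inl ⟨i, hi, hflip, hother⟩)
  · exact .inl rfl

theorem Step.ctrlF_of_mem_ctrlSpace (hOI : Disjoint O I) {s s' : BNState n}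
    (hs : s ∈ ctrlSpace O I) (hs' : s' ∈ ctrlSpace O I) (h : Step F s s') :
    Step (ctrlF O I F) s s' := by
  rcases h with ⟨i, hi, hflip, hother⟩ | ⟨rfl, i, hi⟩
  · refine .inl ⟨i, ?_, hflip, hother⟩
    rw [ctrlF_apply_of_mem_ctrlSpace hOI hs]
    split_ifs with hc
    · rcases hc with hc | hc <;> simp [hs.1, hs'.1, hs.2, hs'.2, hc] at hflip
    · exact hi
  · refine .inr ⟨rfl, i, ?_⟩
    rw [ctrlF_apply_of_mem_ctrlSpace hOI hs]
    split_ifs <;> simp [hi]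

theorem IsAttractor.ctrlF (hOI : Disjoint O I) {A : Set (BNState n)} (hA : IsAttractor F A)
    (hsub : A ⊆ ctrlSpace O I) : IsAttractor (ctrlF O I F) A := by
  refine isAttractor_of_forall_reach_eq hA.1 fun s hs => Set.Subset.antisymm ?_ ?_
  · intro t ht
    induction ht with
    | refl => exact hs
    | tail _ hstep ih =>
      rcases hstep.eq_or_step_of_ctrlF hOI (hsub ih) with rfl | hF
      exacts [ih, hA.mem_of_mem_reach ih (.single hF)]
  · intro t ht
    rw [← hA.2.1 s hs] at ht
    induction ht with
    | refl => exact .refl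
    | @tail u v hu hstep ih =>
      have huA := hA.mem_of_mem_reach hs hu
      have hvA := hA.mem_of_mem_reach huA (.single hstep)
      exact ih.tail (hstep.ctrlF_of_mem_ctrlSpace hOI (hsub huA) (hsub hvA))

end Control

/-- `C` is a permanent target control for the attractor `At`
iff `At` is an attractor of `TS|_C` and `C(S) ⊆ bas^S_{TS|_C}(At)`. -/
theorem ptc_characterisation {n : ℕ} (hn : 1 ≤ n) (F : Fin n → BNState n → Bool)
    (At : Set (BNState n)) (hAt : IsAttractor F At)
    (O I : Finset (Fin n)) (hOI : Disjoint O I) :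
    (At ⊆ ctrlSpace O I ∧
      ∀ s : BNState n, ∀ π : ℕ → BNState n,
        IsPath (ctrlF O I F) π → Fair (ctrlF O I F) π → π 0 = applyControl O I s →
        ∃ k, π k ∈ At)
    ↔ (IsAttractor (ctrlF O I F) At ∧
        Set.range (applyControl O I) ⊆ strongBasin (ctrlF O I F) At) := by
  rw [range_applyControl hOI]
  constructor
  · rintro ⟨hsub, hptc⟩
    have hAtC := hAt.ctrlF hOI hsub
    refine ⟨hAtC, fun s hs => mem_strongBasin_of_forall_fair hn hAtC
      (fun _ => reach_ctrlF_subset_ctrlSpace hOI) (fun π hπ hfair hπ0 => ?_) hs⟩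
    exact hptc (π 0) π hπ hfair (applyControl_of_mem_ctrlSpace hπ0).symm
  · rintro ⟨hAtC, hbasin⟩
    refine ⟨hAtC.subset_ctrlSpace hOI, fun s π hπ hfair hπ0 => ?_⟩
    exact exists_mem_of_mem_strongBasin hπ hfair
      (hbasin ((range_applyControl hOI).subset ⟨s, hπ0.symm⟩))
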